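/- Let A be a real m × n matrix, b ∈ ℝ^m, μ > 0, λ > 0 and γ > 2, and define the SCAD-regularized least squares objective F : ℝ^n → ℝ by F(x) := μ‖Ax − b‖² + Σ_{i=1}^n r_{λ,γ}(x_i). Then for every local minimizer x̄ of F there exist constants c > 0, ε > 0 and η > 0 such that for every x ∈ ℝ^n with ‖x − x̄‖ < ε and F(x̄) < F(x) < F(x̄) + η, every Fréchet subgradient ξ of F at x satisfies ‖ξ‖ ≥ c·(F(x) − F(x̄))^{1/2}. -/

import Mathlib

open scoped RealInnerProductSpace Topology
open Classical in
/-- The SCAD penalty `r_{λ,γ}`. -/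
noncomputable def scadPenalty (lam γ u : ℝ) : ℝ :=
  if |u| ≤ lam then lam * |u|
  else if |u| ≤ γ * lam then (2 * γ * lam * |u| - (u ^ 2 + lam ^ 2)) / (2 * (γ - 1))
  else lam ^ 2 * (γ ^ 2 - 1) / (2 * (γ - 1))

/-- `ξ` is a Fréchet subgradient of `F` at `x`:
`liminf_{y → x, y ≠ x} (F y − F x − ⟪ξ, y − x⟫)/‖y − x‖ ≥ 0`. -/
def IsFrechetSubgradient {n : ℕ} (F : EuclideanSpace ℝ (Fin n) → ℝ)
    (x ξ : EuclideanSpace ℝ (Fin n)) : Prop :=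
  0 ≤ Filter.liminf (fun y => (F y - F x - ⟪ξ, y - x⟫) / ‖y - x‖) (𝓝[≠] x)

/-!
Near any point `x̄` the objective is piecewise quadratic: the SCAD penalty is a polynomial of
degree at most two on either side of every point, so on each sign orthant of `w = x - x̄` the
objective equals `F x̄ + ⟪g, w⟫ + ½ ⟪w, T w⟫` for a self-adjoint `T`. Differentiating along lines
inside the orthant shows that a Fréchet subgradient at `x` agrees with the model gradient
`g + T w` on the span of the orthant. A quadratic satisfies `‖∇q w‖ ≥ c √(q w)` near `0`: either
the (projected) linear part is nonzero and dominates, or `q w = ½ ⟪w, T w⟫ ≤ C ‖T w‖²`. The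
worst constants over the finitely many orthants give the inequality.
-/

open Filter

section QuadraticModel

variable {E : Type*} [NormedAddCommGroup E] [InnerProductSpace ℝ E]

noncomputable def quadraticModel (g : E) (T : E →L[ℝ] E) (w : E) : ℝ := ⟪g, w⟫ + 2⁻¹ * ⟪w, T w⟫

lemma abs_quadraticModel_le (g : E) (T : E →L[ℝ] E) (w : E) :
    |quadraticModel g T w| ≤ ‖g‖ * ‖w‖ + ‖T‖ * ‖w‖ ^ 2 := by
  have hg := abs_real_inner_le_norm g w
  have hT : |⟪w, T w⟫| ≤ ‖T‖ * ‖w‖ ^ 2 :=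
    (abs_real_inner_le_norm _ _).trans (by nlinarith [T.le_opNorm w, norm_nonneg w])
  unfold quadraticModel
  calc |⟪g, w⟫ + 2⁻¹ * ⟪w, T w⟫| ≤ |⟪g, w⟫| + 2⁻¹ * |⟪w, T w⟫| := by
        simpa [abs_mul] using abs_add_le ⟪g, w⟫ (2⁻¹ * ⟪w, T w⟫)
    _ ≤ ‖g‖ * ‖w‖ + ‖T‖ * ‖w‖ ^ 2 := by nlinarith [abs_nonneg ⟪w, T w⟫]

lemma hasDerivAt_quadraticModel_add_smul [CompleteSpace E] {g : E} {T : E →L[ℝ] E}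
    (hT : IsSelfAdjoint T) (w v : E) : HasDerivAt (fun t : ℝ => quadraticModel g T (w + t • v)) ⟪g + T w, v⟫ 0 := by
  have hline : HasDerivAt (fun t : ℝ => w + t • v) v 0 := by
    simpa using ((hasDerivAt_id (0 : ℝ)).smul_const v).const_add w
  have hTline : HasDerivAt (fun t : ℝ => T (w + t • v)) (T v) 0 :=
    T.hasFDerivAt.comp_hasDerivAt 0 hline
  refine (((hasDerivAt_const (0 : ℝ) g).inner ℝ hline).add
    ((hline.inner ℝ hTline).const_mul 2⁻¹)).congr_deriv ?_
  have hsym : ∀ x y, ⟪T x, y⟫ = ⟪x, T y⟫ := hT.isSymmetric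
  rw [zero_smul, add_zero, inner_zero_left, add_zero, ← hsym, real_inner_comm (T w) v,
    inner_add_left]
  ring

variable [FiniteDimensional ℝ E]

/-- `T` is injective, hence antilipschitz, on `(ker T)ᗮ`, and `⟪v, T v⟫` only sees the component
of `v` there. -/
lemma IsSelfAdjoint.exists_inner_le_mul_norm_sq {T : E →L[ℝ] E}
    (hT : IsSelfAdjoint T) : ∃ C > 0, ∀ v, ⟪v, T v⟫ ≤ C * ‖T v‖ ^ 2 := by
  have hsym : ∀ x y, ⟪T x, y⟫ = ⟪x, T y⟫ := hT.isSymmetric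
  set K := (LinearMap.ker (T : E →ₗ[ℝ] E))ᗮ
  have hinj : LinearMap.ker ((T : E →ₗ[ℝ] E).comp K.subtype) = ⊥ := by
    rw [LinearMap.ker_eq_bot']
    intro u hu
    exact Subtype.ext <| (Submodule.orthogonal_disjoint _).le_bot ⟨hu, u.2⟩
  obtain ⟨C, hC, hanti⟩ := ((T : E →ₗ[ℝ] E).comp K.subtype).exists_antilipschitzWith hinj
  refine ⟨C, hC, fun v => ?_⟩
  set u := K.orthogonalProjectionOnto v
  have hker : T (v - u) = 0 := by
    have := K.sub_starProjection_mem_orthogonal v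
    rwa [Submodule.orthogonal_orthogonal] at this
  have hTu : T u = T v := by rwa [map_sub, sub_eq_zero, eq_comm] at hker
  have hu : ‖(u : E)‖ ≤ C * ‖T v‖ := by
    simpa [dist_eq_norm, hTu] using hanti.le_mul_dist u 0
  calc ⟪v, T v⟫ = ⟪(u : E), T v⟫ := by
        rw [← sub_eq_zero, ← inner_sub_left, ← hsym, hker, inner_zero_left]
    _ ≤ ‖(u : E)‖ * ‖T v‖ := real_inner_le_norm _ _
    _ ≤ C * ‖T v‖ * ‖T v‖ := by gcongr
    _ = C * ‖T v‖ ^ 2 := by ring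

theorem exists_mul_sqrt_quadraticModel_le_norm (g : E) {T : E →L[ℝ] E} (hT : IsSelfAdjoint T) :
    ∃ c > 0, ∃ ε > 0, ∀ w, ‖w‖ < ε → c * √(quadraticModel g T w) ≤ ‖g + T w‖ := by
  rcases eq_or_ne g 0 with rfl | hg
  · obtain ⟨C, hC, hle⟩ := hT.exists_inner_le_mul_norm_sq
    refine ⟨√(2 / C), by positivity, 1, one_pos, fun w _ => ?_⟩
    have hq : 2 / C * quadraticModel 0 T w ≤ ‖T w‖ ^ 2 := by
      rw [quadraticModel, inner_zero_left, zero_add, div_mul_eq_mul_div, div_le_iff₀ hC]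
      nlinarith [hle w]
    calc √(2 / C) * √(quadraticModel 0 T w) = √(2 / C * quadraticModel 0 T w) :=
          (Real.sqrt_mul (by positivity) _).symm
      _ ≤ √(‖T w‖ ^ 2) := Real.sqrt_le_sqrt hq
      _ = ‖0 + T w‖ := by rw [zero_add, Real.sqrt_sq (norm_nonneg _)]
  · have hg : 0 < ‖g‖ := norm_pos_iff.2 hg
    refine ⟨√(‖g‖ / 2), by positivity, ‖g‖ / (2 * (‖g‖ + ‖T‖ + 1)), by positivity,
      fun w hw => ?_⟩
    have hsmall : (‖g‖ + ‖T‖ + 1) * ‖w‖ < ‖g‖ / 2 := by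
      rw [lt_div_iff₀ (by positivity)] at hw
      linarith
    have hw1 : ‖w‖ ≤ 1 := by nlinarith [norm_nonneg T, norm_nonneg w]
    have hq : quadraticModel g T w ≤ ‖g‖ / 2 := by
      have hTw : ‖T‖ * ‖w‖ ^ 2 ≤ ‖T‖ * ‖w‖ := by
        nlinarith [mul_nonneg (mul_nonneg (norm_nonneg T) (norm_nonneg w)) (sub_nonneg.2 hw1)]
      linarith [(le_abs_self _).trans (abs_quadraticModel_le g T w), norm_nonneg w]
    have hgrad : ‖g‖ / 2 ≤ ‖g + T w‖ := by
      have := norm_sub_norm_le g (-T w)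
      rw [norm_neg, sub_neg_eq_add] at this
      nlinarith [T.le_opNorm w, norm_nonneg T, norm_nonneg w]
    calc √(‖g‖ / 2) * √(quadraticModel g T w) = √(‖g‖ / 2 * quadraticModel g T w) :=
          (Real.sqrt_mul (by positivity) _).symm
      _ ≤ √((‖g‖ / 2) ^ 2) := Real.sqrt_le_sqrt (by rw [sq]; gcongr)
      _ = ‖g‖ / 2 := Real.sqrt_sq (by positivity)
      _ ≤ ‖g + T w‖ := hgrad

/-- Compressing `g` and `T` to `V` by its orthogonal projection `P` does not change the model on
`V`, and turns its gradient into `P ξ`. -/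
theorem exists_mul_sqrt_quadraticModel_le_norm_of_forall_inner_eq (V : Submodule ℝ E) (g : E)
    {T : E →L[ℝ] E} (hT : IsSelfAdjoint T) :
    ∃ c > 0, ∃ ε > 0, ∀ w ∈ V, ‖w‖ < ε → ∀ ξ, (∀ v ∈ V, ⟪ξ, v⟫ = ⟪g + T w, v⟫) →
      c * √(quadraticModel g T w) ≤ ‖ξ‖ := by
  set P := V.starProjection
  obtain ⟨c, hc, ε, hε, hkl⟩ :=
    exists_mul_sqrt_quadraticModel_le_norm (P g) (hT.conj_starProjection V)
  refine ⟨c, hc, ε, hε, fun w hw hwε ξ hξ => ?_⟩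
  have hPw : P w = w := Submodule.starProjection_eq_self_iff.2 hw
  have hq : quadraticModel (P g) (P ∘L T ∘L P) w = quadraticModel g T w := by
    simp only [quadraticModel, ContinuousLinearMap.comp_apply, hPw, P,
      Submodule.inner_starProjection_left_eq_right]
    rw [← Submodule.inner_starProjection_left_eq_right, hPw]
  have hgrad : P g + (P ∘L T ∘L P) w = P ξ := by
    have hperp : ξ - (g + T w) ∈ Vᗮ := (Submodule.mem_orthogonal' _ _).2 fun v hv => by
      rw [inner_sub_left, hξ v hv, sub_self]
    rw [← sub_eq_zero, ContinuousLinearMap.comp_apply, ContinuousLinearMap.comp_apply, hPw,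
      ← map_add, ← map_sub, V.starProjection_apply_eq_zero_iff, ← neg_mem_iff, neg_sub]
    exact hperp
  calc c * √(quadraticModel g T w) = c * √(quadraticModel (P g) (P ∘L T ∘L P) w) := by rw [hq]
    _ ≤ ‖P g + (P ∘L T ∘L P) w‖ := hkl w hwε
    _ = ‖P ξ‖ := by rw [hgrad]
    _ ≤ ‖ξ‖ := V.norm_starProjection_apply_le ξ

end QuadraticModel

lemma HasDerivAt.eq_zero_of_forall_eventually_sub_mul_abs_le {φ : ℝ → ℝ} {c a : ℝ}
    (hφ : HasDerivAt φ c a) (h : ∀ δ > 0, ∀ᶠ t in 𝓝 a, φ a - δ * |t - a| ≤ φ t) : c = 0 := by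
  have hslope := hasDerivAt_iff_tendsto_slope.1 hφ
  have hbound : ∀ δ > 0, |c| ≤ δ := by
    intro δ hδ
    rw [abs_le]
    constructor
    · refine ge_of_tendsto (hslope.mono_left (nhdsGT_le_nhdsNE a)) ?_
      filter_upwards [nhdsWithin_le_nhds (h δ hδ), self_mem_nhdsWithin] with t ht (hat : a < t)
      rw [slope_def_field, le_div_iff₀ (sub_pos.2 hat)]
      rw [abs_of_pos (sub_pos.2 hat)] at ht
      linarith
    · refine le_of_tendsto (hslope.mono_left (nhdsLT_le_nhdsNE a)) ?_
      filter_upwards [nhdsWithin_le_nhds (h δ hδ), self_mem_nhdsWithin] with t ht (hta : t < a)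
      rw [slope_def_field, div_le_iff_of_neg (sub_neg.2 hta)]
      rw [abs_of_neg (sub_neg.2 hta)] at ht
      linarith
  exact abs_nonpos_iff.1 (le_of_forall_pos_le_add fun δ hδ => by simpa using hbound δ hδ)

section FrechetSubgradient

variable {n : ℕ} {F : EuclideanSpace ℝ (Fin n) → ℝ} {x ξ : EuclideanSpace ℝ (Fin n)}

/-- The lower bound on `F` matters: the `liminf` of a quotient that is unbounded below is
`sSup ∅ = 0` in `ℝ`, which would make every `ξ` a subgradient. -/
lemma IsFrechetSubgradient.eventually_le (hξ : IsFrechetSubgradient F x ξ)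
    (hcalm : ∃ K, ∀ᶠ y in 𝓝 x, F x - K * ‖y - x‖ ≤ F y) {δ : ℝ} (hδ : 0 < δ) :
    ∀ᶠ y in 𝓝 x, F x + ⟪ξ, y - x⟫ - δ * ‖y - x‖ ≤ F y := by
  obtain ⟨K, hK⟩ := hcalm
  have hbdd : IsBoundedUnder (· ≥ ·) (𝓝[≠] x)
      (fun y => (F y - F x - ⟪ξ, y - x⟫) / ‖y - x‖) := by
    refine ⟨-(K + ‖ξ‖), ?_⟩
    rw [eventually_map]
    filter_upwards [nhdsWithin_le_nhds hK, self_mem_nhdsWithin] with y hy (hne : y ≠ x)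
    rw [ge_iff_le, le_div_iff₀ (norm_pos_iff.2 (sub_ne_zero.2 hne))]
    nlinarith [real_inner_le_norm ξ (y - x)]
  have hlt := eventually_lt_of_lt_liminf ((neg_neg_of_pos hδ).trans_le hξ) hbdd
  filter_upwards [eventually_nhdsWithin_iff.1 hlt] with y hy
  rcases eq_or_ne y x with rfl | hne
  · simp
  · have := hy hne
    rw [lt_div_iff₀ (norm_pos_iff.2 (sub_ne_zero.2 hne))] at this
    linarith

lemma IsFrechetSubgradient.inner_eq_of_hasDerivAt (hξ : IsFrechetSubgradient F x ξ)
    (hcalm : ∃ K, ∀ᶠ y in 𝓝 x, F x - K * ‖y - x‖ ≤ F y) (v : EuclideanSpace ℝ (Fin n)) {D : ℝ}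
    (hD : HasDerivAt (fun t : ℝ => F (x + t • v)) D 0) : ⟪ξ, v⟫ = D := by
  have hφ : HasDerivAt (fun t : ℝ => F (x + t • v) - t * ⟪ξ, v⟫) (D - ⟪ξ, v⟫) 0 :=
    hD.sub (hasDerivAt_mul_const ⟪ξ, v⟫)
  have hline : Tendsto (fun t : ℝ => x + t • v) (𝓝 0) (𝓝 x) :=
    (by fun_prop : Continuous fun t : ℝ => x + t • v).tendsto' 0 x (by simp)
  refine (sub_eq_zero.1 (hφ.eq_zero_of_forall_eventually_sub_mul_abs_le fun δ hδ => ?_)).symm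
  have hδ' : 0 < δ / (‖v‖ + 1) := by positivity
  filter_upwards [hline.eventually (hξ.eventually_le hcalm hδ')] with t ht
  simp only [add_sub_cancel_left, real_inner_smul_right, norm_smul, Real.norm_eq_abs] at ht
  have hv : δ / (‖v‖ + 1) * (|t| * ‖v‖) ≤ δ * |t| := by
    rw [div_mul_eq_mul_div, div_le_iff₀ (by positivity)]
    nlinarith [abs_nonneg t, norm_nonneg v, mul_nonneg hδ.le (abs_nonneg t)]
  simp only [zero_smul, add_zero, zero_mul, sub_zero]
  linarith

end FrechetSubgradient

section PiecewiseQuadratic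

variable {n : ℕ}

def orthant (σ : Fin n → SignType) : Set (EuclideanSpace ℝ (Fin n)) :=
  {w | ∀ i, SignType.sign (w i) = σ i}

def orthantSpan (σ : Fin n → SignType) : Submodule ℝ (EuclideanSpace ℝ (Fin n)) where
  carrier := {v | ∀ i, σ i = 0 → v i = 0}
  add_mem' hu hv i hi := by simp [hu i hi, hv i hi]
  zero_mem' _ _ := rfl
  smul_mem' c v hv i hi := by simp [hv i hi]

lemma mem_orthantSpan_of_mem_orthant {σ : Fin n → SignType} {w : EuclideanSpace ℝ (Fin n)}
    (hw : w ∈ orthant σ) : w ∈ orthantSpan σ :=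
  fun i hi => sign_eq_zero_iff.1 ((hw i).trans hi)

lemma eventually_add_smul_mem_orthant {σ : Fin n → SignType} {w v : EuclideanSpace ℝ (Fin n)}
    (hw : w ∈ orthant σ) (hv : v ∈ orthantSpan σ) :
    ∀ᶠ t in 𝓝 (0 : ℝ), w + t • v ∈ orthant σ := by
  refine eventually_all.2 fun i => ?_
  have hline : Tendsto (fun t : ℝ => w i + t * v i) (𝓝 0) (𝓝 (w i)) :=
    (by fun_prop : Continuous fun t : ℝ => w i + t * v i).tendsto' 0 _ (by simp)
  simp only [PiLp.add_apply, PiLp.smul_apply, smul_eq_mul, ← hw i]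
  rcases lt_trichotomy (w i) 0 with hneg | hzero | hpos
  · filter_upwards [hline.eventually (gt_mem_nhds hneg)] with t ht
    rw [sign_neg ht, sign_neg hneg]
  · have hvi : v i = 0 := hv i (by rw [← hw i, hzero, sign_zero])
    exact Eventually.of_forall fun t => by simp [hzero, hvi]
  · filter_upwards [hline.eventually (lt_mem_nhds hpos)] with t ht
    rw [sign_pos ht, sign_pos hpos]

def IsPiecewiseQuadraticAt (F : EuclideanSpace ℝ (Fin n) → ℝ) (x : EuclideanSpace ℝ (Fin n)) :
    Prop :=
  ∀ σ : Fin n → SignType, ∃ (g : EuclideanSpace ℝ (Fin n))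
    (T : EuclideanSpace ℝ (Fin n) →L[ℝ] EuclideanSpace ℝ (Fin n)), IsSelfAdjoint T ∧
      ∀ᶠ w in 𝓝 0, w ∈ orthant σ → F (x + w) = F x + quadraticModel g T w

def IsQuadraticOnSide (f : ℝ → ℝ) (u : ℝ) (s : SignType) : Prop :=
  ∃ g a : ℝ, ∀ᶠ t in 𝓝 0, SignType.sign t = s → f (u + t) = f u + g * t + a * t ^ 2

lemma IsQuadraticOnSide.zero (f : ℝ → ℝ) (u : ℝ) : IsQuadraticOnSide f u 0 :=
  ⟨0, 0, Eventually.of_forall fun t ht => by simp [sign_eq_zero_iff.1 ht]⟩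

lemma IsQuadraticOnSide.of_neg {f : ℝ → ℝ} (hf : ∀ x, f (-x) = f x) {u : ℝ} {s : SignType}
    (h : IsQuadraticOnSide f (-u) (-s)) : IsQuadraticOnSide f u s := by
  obtain ⟨g, a, h⟩ := h
  refine ⟨-g, a, ?_⟩
  filter_upwards [(continuous_neg.tendsto' (0 : ℝ) 0 neg_zero).eventually h] with t ht hs
  have := ht (by rw [Left.sign_neg, hs])
  rw [← neg_add, hf, hf] at this
  rw [this]
  ring

lemma IsPiecewiseQuadraticAt.add {F G : EuclideanSpace ℝ (Fin n) → ℝ}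
    {x : EuclideanSpace ℝ (Fin n)} (hF : IsPiecewiseQuadraticAt F x)
    (hG : IsPiecewiseQuadraticAt G x) : IsPiecewiseQuadraticAt (fun y => F y + G y) x := by
  intro σ
  obtain ⟨g₁, T₁, hT₁, h₁⟩ := hF σ
  obtain ⟨g₂, T₂, hT₂, h₂⟩ := hG σ
  refine ⟨g₁ + g₂, T₁ + T₂, (hT₁.isSymmetric.add hT₂.isSymmetric).isSelfAdjoint, ?_⟩
  filter_upwards [h₁, h₂] with w hw₁ hw₂ hw
  rw [hw₁ hw, hw₂ hw]
  simp only [quadraticModel, inner_add_left, inner_add_right, add_apply]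
  ring

lemma isPiecewiseQuadraticAt_mul_norm_sub_sq {G : Type*} [NormedAddCommGroup G]
    [InnerProductSpace ℝ G] [CompleteSpace G] (μ : ℝ)
    (L : EuclideanSpace ℝ (Fin n) →L[ℝ] G) (b : G) (x : EuclideanSpace ℝ (Fin n)) :
    IsPiecewiseQuadraticAt (fun y => μ * ‖L y - b‖ ^ 2) x := by
  refine fun _ => ⟨(2 * μ) • L.adjoint (L x - b), (2 * μ) • (L.adjoint ∘L L), ?_,
    Eventually.of_forall fun w _ => ?_⟩
  · refine (IsSelfAdjoint.all (2 * μ)).smul (LinearMap.IsSymmetric.isSelfAdjoint fun u v => ?_)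
    simp [ContinuousLinearMap.adjoint_inner_left, ContinuousLinearMap.adjoint_inner_right]
  · simp only [quadraticModel, map_add, smul_apply,
      ContinuousLinearMap.comp_apply, real_inner_smul_left, real_inner_smul_right,
      ContinuousLinearMap.adjoint_inner_left, ContinuousLinearMap.adjoint_inner_right,
      real_inner_self_eq_norm_sq]
    rw [show L x + L w - b = (L x - b) + L w by abel, norm_add_sq_real]
    ring

lemma isPiecewiseQuadraticAt_sum {f : Fin n → ℝ → ℝ} {x : EuclideanSpace ℝ (Fin n)}
    (hf : ∀ i s, IsQuadraticOnSide (f i) (x i) s) :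
    IsPiecewiseQuadraticAt (fun y => ∑ i, f i (y i)) x := by
  intro σ
  choose g a h using fun i => hf i (σ i)
  refine ⟨WithLp.toLp 2 g, Matrix.toEuclideanCLM (𝕜 := ℝ) (Matrix.diagonal fun i => 2 * a i),
    IsSelfAdjoint.map (Matrix.isHermitian_diagonal fun i => 2 * a i) _, ?_⟩
  have hcoord : ∀ i, Tendsto (fun w : EuclideanSpace ℝ (Fin n) => w i) (𝓝 0) (𝓝 0) := fun i =>
    (by fun_prop : Continuous fun w : EuclideanSpace ℝ (Fin n) => w i).tendsto' 0 0 (by simp)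
  filter_upwards [eventually_all.2 fun i => (hcoord i).eventually (h i)] with w hw hwσ
  simp only [PiLp.add_apply, fun i => hw i (hwσ i), quadraticModel, Matrix.ofLp_toEuclideanCLM,
    Matrix.mulVec_diagonal, PiLp.inner_apply, RCLike.inner_apply, conj_trivial, Finset.mul_sum]
  rw [← Finset.sum_add_distrib, ← Finset.sum_add_distrib]
  exact Finset.sum_congr rfl fun i _ => by ring

variable {F : EuclideanSpace ℝ (Fin n) → ℝ}

lemma IsPiecewiseQuadraticAt.exists_eventually_sub_mul_norm_le {x : EuclideanSpace ℝ (Fin n)}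
    (hF : IsPiecewiseQuadraticAt F x) : ∃ K, ∀ᶠ y in 𝓝 x, F x - K * ‖y - x‖ ≤ F y := by
  choose g T _ hmodel using hF
  refine ⟨∑ σ, (‖g σ‖ + ‖T σ‖), ?_⟩
  have hsub : Tendsto (fun y => y - x) (𝓝 x) (𝓝 0) := tendsto_sub_nhds_zero_iff.2 tendsto_id
  filter_upwards [hsub.eventually (eventually_all.2 hmodel),
    hsub.eventually (Metric.closedBall_mem_nhds 0 one_pos)] with y hy hy1
  set w := y - x
  set σ : Fin n → SignType := fun i => SignType.sign (w i)
  have hw1 : ‖w‖ ≤ 1 := by simpa using hy1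
  have hFy : F y = F x + quadraticModel (g σ) (T σ) w := by
    simpa [w] using hy σ fun i => rfl
  have hq := neg_abs_le (quadraticModel (g σ) (T σ) w) |>.trans' <|
    neg_le_neg (abs_quadraticModel_le (g σ) (T σ) w)
  have hK : ‖g σ‖ + ‖T σ‖ ≤ ∑ σ, (‖g σ‖ + ‖T σ‖) :=
    Finset.single_le_sum (f := fun σ => ‖g σ‖ + ‖T σ‖) (fun _ _ => by positivity)
      (Finset.mem_univ σ)
  have hTw : ‖T σ‖ * ‖w‖ ^ 2 ≤ ‖T σ‖ * ‖w‖ := by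
    nlinarith [mul_nonneg (mul_nonneg (norm_nonneg (T σ)) (norm_nonneg w)) (sub_nonneg.2 hw1)]
  nlinarith [norm_nonneg w]

lemma IsFrechetSubgradient.inner_eq_of_eventually_eq_quadraticModel
    {x w ξ : EuclideanSpace ℝ (Fin n)} {σ : Fin n → SignType} {g : EuclideanSpace ℝ (Fin n)}
    {T : EuclideanSpace ℝ (Fin n) →L[ℝ] EuclideanSpace ℝ (Fin n)}
    (hξ : IsFrechetSubgradient F (x + w) ξ)
    (hcalm : ∃ K, ∀ᶠ y in 𝓝 (x + w), F (x + w) - K * ‖y - (x + w)‖ ≤ F y)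
    (hT : IsSelfAdjoint T) (hw : w ∈ orthant σ)
    (hmodel : ∀ᶠ w' in 𝓝 w, w' ∈ orthant σ → F (x + w') = F x + quadraticModel g T w')
    {v : EuclideanSpace ℝ (Fin n)} (hv : v ∈ orthantSpan σ) : ⟪ξ, v⟫ = ⟪g + T w, v⟫ := by
  refine hξ.inner_eq_of_hasDerivAt hcalm v <|
    ((hasDerivAt_quadraticModel_add_smul hT w v).const_add (F x)).congr_of_eventuallyEq ?_
  have hline : Tendsto (fun t : ℝ => w + t • v) (𝓝 0) (𝓝 w) :=
    (by fun_prop : Continuous fun t : ℝ => w + t • v).tendsto' 0 w (by simp)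
  filter_upwards [hline.eventually hmodel, eventually_add_smul_mem_orthant hw hv] with t ht hmem
  rw [add_assoc, ht hmem]

theorem exists_kl_exponent_half_of_isPiecewiseQuadraticAt (hF : ∀ y, IsPiecewiseQuadraticAt F y)
    (xbar : EuclideanSpace ℝ (Fin n)) :
    ∃ c > 0, ∃ ε > 0, ∀ x, ‖x - xbar‖ < ε → ∀ ξ, IsFrechetSubgradient F x ξ →
      c * √(F x - F xbar) ≤ ‖ξ‖ := by
  choose g T hT hmodel using hF xbar
  choose c hc ε hε hkl using fun σ =>
    exists_mul_sqrt_quadraticModel_le_norm_of_forall_inner_eq (orthantSpan σ) (g σ) (hT σ)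
  obtain ⟨ρ, hρ, hball⟩ := Metric.eventually_nhds_iff_ball.1 (eventually_all.2 hmodel)
  have hne : (Finset.univ : Finset (Fin n → SignType)).Nonempty := Finset.univ_nonempty
  refine ⟨Finset.univ.inf' hne c, (Finset.lt_inf'_iff hne).2 fun σ _ => hc σ,
    min ρ (Finset.univ.inf' hne ε), lt_min hρ ((Finset.lt_inf'_iff hne).2 fun σ _ => hε σ),
    fun x hx ξ hξ => ?_⟩
  obtain ⟨w, rfl⟩ : ∃ w, x = xbar + w := ⟨x - xbar, (add_sub_cancel xbar x).symm⟩
  rw [add_sub_cancel_left] at hx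
  set σ : Fin n → SignType := fun i => SignType.sign (w i)
  have hw : w ∈ orthant σ := fun i => rfl
  have hwρ : w ∈ Metric.ball 0 ρ := mem_ball_zero_iff.2 (hx.trans_le (min_le_left _ _))
  have hgrad : ∀ v ∈ orthantSpan σ, ⟪ξ, v⟫ = ⟪g σ + T σ w, v⟫ := fun v hv =>
    hξ.inner_eq_of_eventually_eq_quadraticModel (hF _).exists_eventually_sub_mul_norm_le (hT σ) hw
      (Filter.mem_of_superset (Metric.isOpen_ball.mem_nhds hwρ) fun w' hw' => hball w' hw' σ) hv
  calc Finset.univ.inf' hne c * √(F (xbar + w) - F xbar)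
      ≤ c σ * √(quadraticModel (g σ) (T σ) w) := by
        rw [hball w hwρ σ hw, add_sub_cancel_left]
        gcongr
        exact Finset.inf'_le _ (Finset.mem_univ σ)
    _ ≤ ‖ξ‖ := hkl σ w (mem_orthantSpan_of_mem_orthant hw)
        (hx.trans_le ((min_le_right _ _).trans (Finset.inf'_le _ (Finset.mem_univ σ)))) ξ hgrad

end PiecewiseQuadratic

section SCAD

lemma scadPenalty_neg (lam γ u : ℝ) : scadPenalty lam γ (-u) = scadPenalty lam γ u := by
  simp [scadPenalty]

variable {lam γ u : ℝ}

lemma scadPenalty_of_nonneg_of_le (hu : 0 ≤ u) (h : u ≤ lam) : scadPenalty lam γ u = lam * u := by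
  rw [scadPenalty, abs_of_nonneg hu, if_pos h]

lemma scadPenalty_of_le_of_le (hlam : 0 < lam) (hγ : 1 < γ) (h₁ : lam ≤ u) (h₂ : u ≤ γ * lam) :
    scadPenalty lam γ u = (2 * γ * lam * u - (u ^ 2 + lam ^ 2)) / (2 * (γ - 1)) := by
  have hγ' : γ - 1 ≠ 0 := (sub_pos.2 hγ).ne'
  rcases h₁.eq_or_lt with rfl | h₁
  · rw [scadPenalty_of_nonneg_of_le hlam.le le_rfl]
    field_simp
    ring
  · rw [scadPenalty, abs_of_pos (hlam.trans h₁), if_neg h₁.not_ge, if_pos h₂]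

lemma scadPenalty_of_le (hlam : 0 < lam) (hγ : 1 < γ) (h : γ * lam ≤ u) :
    scadPenalty lam γ u = lam ^ 2 * (γ ^ 2 - 1) / (2 * (γ - 1)) := by
  have hγ' : γ - 1 ≠ 0 := (sub_pos.2 hγ).ne'
  have hlt : lam < u := (lt_mul_of_one_lt_left hlam hγ).trans_le h
  rcases h.eq_or_lt with rfl | h
  · rw [scadPenalty_of_le_of_le hlam hγ hlt.le le_rfl]
    field_simp
    ring
  · rw [scadPenalty, abs_of_pos (hlam.trans hlt), if_neg hlt.not_ge, if_neg h.not_ge]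

lemma scadPenalty_isQuadraticOnSide_one (hlam : 0 < lam) (hγ : 1 < γ) (hu : 0 ≤ u) :
    IsQuadraticOnSide (scadPenalty lam γ) u 1 := by
  have hγ' : γ - 1 ≠ 0 := (sub_pos.2 hγ).ne'
  rcases lt_or_ge u lam with h₁ | h₁
  · refine ⟨lam, 0, ?_⟩
    filter_upwards [gt_mem_nhds (sub_pos.2 h₁)] with t ht hs
    have ht0 := sign_eq_one_iff.1 hs
    rw [scadPenalty_of_nonneg_of_le (by linarith) (by linarith),
      scadPenalty_of_nonneg_of_le hu h₁.le]
    ring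
  rcases lt_or_ge u (γ * lam) with h₂ | h₂
  · refine ⟨(γ * lam - u) / (γ - 1), -1 / (2 * (γ - 1)), ?_⟩
    filter_upwards [gt_mem_nhds (sub_pos.2 h₂)] with t ht hs
    have ht0 := sign_eq_one_iff.1 hs
    rw [scadPenalty_of_le_of_le hlam hγ (by linarith) (by linarith),
      scadPenalty_of_le_of_le hlam hγ h₁ h₂.le]
    field_simp
    ring
  · refine ⟨0, 0, Eventually.of_forall fun t hs => ?_⟩
    have ht0 := sign_eq_one_iff.1 hs
    rw [scadPenalty_of_le hlam hγ (by linarith), scadPenalty_of_le hlam hγ h₂]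
    ring

lemma scadPenalty_isQuadraticOnSide_neg_one (hlam : 0 < lam) (hγ : 1 < γ) (hu : 0 < u) :
    IsQuadraticOnSide (scadPenalty lam γ) u (-1) := by
  have hγ' : γ - 1 ≠ 0 := (sub_pos.2 hγ).ne'
  rcases le_or_gt u lam with h₁ | h₁
  · refine ⟨lam, 0, ?_⟩
    filter_upwards [lt_mem_nhds (neg_neg_of_pos hu)] with t ht hs
    have ht0 := sign_eq_neg_one_iff.1 hs
    rw [scadPenalty_of_nonneg_of_le (by linarith) (by linarith),
      scadPenalty_of_nonneg_of_le hu.le h₁]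
    ring
  rcases le_or_gt u (γ * lam) with h₂ | h₂
  · refine ⟨(γ * lam - u) / (γ - 1), -1 / (2 * (γ - 1)), ?_⟩
    filter_upwards [lt_mem_nhds (sub_neg.2 h₁)] with t ht hs
    have ht0 := sign_eq_neg_one_iff.1 hs
    rw [scadPenalty_of_le_of_le hlam hγ (by linarith) (by linarith),
      scadPenalty_of_le_of_le hlam hγ h₁.le h₂]
    field_simp
    ring
  · refine ⟨0, 0, ?_⟩
    filter_upwards [lt_mem_nhds (sub_neg.2 h₂)] with t ht hs
    rw [scadPenalty_of_le hlam hγ (by linarith), scadPenalty_of_le hlam hγ h₂.le]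
    ring

lemma scadPenalty_isQuadraticOnSide (hlam : 0 < lam) (hγ : 1 < γ) (s : SignType) :
    IsQuadraticOnSide (scadPenalty lam γ) u s := by
  have heven := scadPenalty_neg lam γ
  have hnonneg : ∀ v, 0 ≤ v → ∀ s, IsQuadraticOnSide (scadPenalty lam γ) v s := by
    intro v hv s
    obtain rfl | rfl | rfl := s.trichotomy
    · rcases hv.eq_or_lt with rfl | hv
      · exact .of_neg heven (by simpa using scadPenalty_isQuadraticOnSide_one hlam hγ le_rfl)
      · exact scadPenalty_isQuadraticOnSide_neg_one hlam hγ hv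
    · exact .zero _ _
    · exact scadPenalty_isQuadraticOnSide_one hlam hγ hv
  rcases le_total 0 u with hu | hu
  · exact hnonneg u hu s
  · exact .of_neg heven (hnonneg (-u) (neg_nonneg.2 hu) (-s))

end SCAD

theorem scad_LS_KL_exponent_half_general
    (m n : ℕ) (A : Matrix (Fin m) (Fin n) ℝ) (b : Fin m → ℝ)
    (μ lam γ : ℝ) (hlam : 0 < lam) (hγ : 2 < γ) :
    let F : EuclideanSpace ℝ (Fin n) → ℝ :=
      fun x => μ * ∑ j, (A.mulVec x j - b j) ^ 2 + ∑ i, scadPenalty lam γ (x i)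
    ∀ xbar : EuclideanSpace ℝ (Fin n), IsLocalMin F xbar →
      ∃ c > (0 : ℝ), ∃ ε > (0 : ℝ), ∃ η > (0 : ℝ),
        ∀ x : EuclideanSpace ℝ (Fin n),
          ‖x - xbar‖ < ε → F xbar < F x → F x < F xbar + η →
            ∀ ξ : EuclideanSpace ℝ (Fin n), IsFrechetSubgradient F x ξ →
              c * Real.sqrt (F x - F xbar) ≤ ‖ξ‖ := by
  intro F xbar _
  set L : EuclideanSpace ℝ (Fin n) →L[ℝ] EuclideanSpace ℝ (Fin m) :=
    LinearMap.toContinuousLinearMap (Matrix.toLpLin 2 2 A)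
  have hF : F = fun x => μ * ‖L x - WithLp.toLp 2 b‖ ^ 2 + ∑ i, scadPenalty lam γ (x i) := by
    funext x
    simp [F, L, EuclideanSpace.norm_sq_eq, Matrix.ofLp_toLpLin]
  have hpq : ∀ y, IsPiecewiseQuadraticAt F y := fun y => by
    rw [hF]
    exact (isPiecewiseQuadraticAt_mul_norm_sub_sq μ L _ y).add
      (isPiecewiseQuadraticAt_sum fun i => scadPenalty_isQuadraticOnSide hlam (by linarith))
  obtain ⟨c, hc, ε, hε, hkl⟩ := exists_kl_exponent_half_of_isPiecewiseQuadraticAt hpq xbar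
  exact ⟨c, hc, ε, hε, 1, one_pos, fun x hx _ _ ξ hξ => hkl x hx ξ hξ⟩

/-- The SCAD-regularized least squares objective
`F(x) = μ‖Ax − b‖² + Σᵢ r_{λ,γ}(xᵢ)` satisfies the KL inequality with exponent
`1/2` around every local minimizer. -/
theorem scad_LS_KL_exponent_half
    (m n : ℕ) (A : Matrix (Fin m) (Fin n) ℝ) (b : Fin m → ℝ)
    (μ lam γ : ℝ) (hμ : 0 < μ) (hlam : 0 < lam) (hγ : 2 < γ) :
    let F : EuclideanSpace ℝ (Fin n) → ℝ :=
      fun x => μ * ∑ j, (A.mulVec x j - b j) ^ 2 + ∑ i, scadPenalty lam γ (x i)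
    ∀ xbar : EuclideanSpace ℝ (Fin n), IsLocalMin F xbar →
      ∃ c > (0 : ℝ), ∃ ε > (0 : ℝ), ∃ η > (0 : ℝ),
        ∀ x : EuclideanSpace ℝ (Fin n),
          ‖x - xbar‖ < ε → F xbar < F x → F x < F xbar + η →
            ∀ ξ : EuclideanSpace ℝ (Fin n), IsFrechetSubgradient F x ξ →
              c * Real.sqrt (F x - F xbar) ≤ ‖ξ‖ :=
  scad_LS_KL_exponent_half_general m n A b μ lam γ hlam hγ
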